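/- Let 𝒜 be a semiprime commutative K-algebra with finitely many (at least two) minimal primes, such that the total quotient ring Q(𝒜) is a product of s ≥ 2 fields K_1 × ⋯ × K_s, and suppose D(Q(𝒜)) is the localization of D(𝒜) at the regular elements of 𝒜, containing D(𝒜) as an essential left D(𝒜)-submodule. Then D(𝒜) is not a simple ring: the intersection D(𝒜) ∩ D(K_1) (inside D(Q(𝒜)) ≅ ∏_i D(K_i)) is a proper nonzero two-sided ideal of D(𝒜). -/

import Mathlib

/-- The multiplication operator on a commutative `K`-algebra `R` given by an element `r : R`,
viewed as a `K`-linear endomorphism of `R`.  This identifies `R` with `D_0(R)`. -/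
noncomputable def mulOp (K : Type*) {R : Type*} [Field K] [CommRing R] [Algebra K R]
    (r : R) : Module.End K R := Algebra.lmul K R r

/-- `IsDO K n u` means that `u` is a (`K`-linear) differential operator on `R` of order at
most `n` in the sense of the order filtration: `D_{-1}(R) = 0` and
`D_n(R) = {u ∈ End_K(R) : [r, u] ∈ D_{n-1}(R) for all r ∈ R}`. -/
def IsDO (K : Type*) {R : Type*} [Field K] [CommRing R] [Algebra K R] :
    ℕ → Module.End K R → Prop
  | 0, u => ∀ r : R, mulOp K r * u = u * mulOp K r
  | n + 1, u => ∀ r : R, IsDO K n (mulOp K r * u - u * mulOp K r)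

/-- The ring `D(R) = ⋃ D_n(R)` of all `K`-linear differential operators on `R`,
as a subset of `End_K(R)`. -/
def DiffOp (K R : Type*) [Field K] [CommRing R] [Algebra K R] :
    Set (Module.End K R) := {u | ∃ n, IsDO K n u}

/-- `I` is a two-sided ideal of the ring `D(R)`. -/
structure IsIdealOfD (K R : Type*) [Field K] [CommRing R] [Algebra K R]
    (I : Set (Module.End K R)) : Prop where
  subset : I ⊆ DiffOp K R
  zero_mem : (0 : Module.End K R) ∈ I
  add_mem : ∀ u v, u ∈ I → v ∈ I → u + v ∈ I
  neg_mem : ∀ u, u ∈ I → -u ∈ I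
  mul_mem_left : ∀ d u, d ∈ DiffOp K R → u ∈ I → d * u ∈ I
  mul_mem_right : ∀ d u, d ∈ DiffOp K R → u ∈ I → u * d ∈ I
/-- `φ` realizes `D(S⁻¹A)` as a (left and right) localization of `D(A)` at the images of the
elements of `S`, in which `D(A)` embeds: `φ` is an injective ring-map of `D(A)` into
`D(S⁻¹A)` extending `A → S⁻¹A` on multiplication operators, and every element `q` of
`D(S⁻¹A)` is of the form `φ(d)·s⁻¹` (and of the form `s⁻¹·φ(d)`) for some `s ∈ S`. -/
structure IsDiffOpLocalization (K : Type*) {A : Type*} [Field K] [CommRing A] [Algebra K A]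
    (S : Submonoid A) (φ : Module.End K A → Module.End K (Localization S)) : Prop where
  maps_diffOp : ∀ u ∈ DiffOp K A, φ u ∈ DiffOp K (Localization S)
  injOn : ∀ u ∈ DiffOp K A, ∀ v ∈ DiffOp K A, φ u = φ v → u = v
  map_add : ∀ u ∈ DiffOp K A, ∀ v ∈ DiffOp K A, φ (u + v) = φ u + φ v
  map_mul : ∀ u ∈ DiffOp K A, ∀ v ∈ DiffOp K A, φ (u * v) = φ u * φ v
  map_one : φ 1 = 1
  map_mulOp : ∀ a : A, φ (mulOp K a) = mulOp K (algebraMap A (Localization S) a)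
  right_loc : ∀ q ∈ DiffOp K (Localization S), ∃ s ∈ S, ∃ d ∈ DiffOp K A,
      q * mulOp K (algebraMap A (Localization S) s) = φ d
  left_loc : ∀ q ∈ DiffOp K (Localization S), ∃ s ∈ S, ∃ d ∈ DiffOp K A,
      mulOp K (algebraMap A (Localization S) s) * q = φ d

section Aux
variable (K : Type*) {R : Type*} [Field K] [CommRing R] [Algebra K R]

lemma mulOp_mul (a b : R) : mulOp K (a * b) = mulOp K a * mulOp K b :=
  map_mul (Algebra.lmul K R) a b

lemma mulOp_apply (a b : R) : mulOp K a b = a * b := rfl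

lemma mulOp_comm (a b : R) : mulOp K a * mulOp K b = mulOp K b * mulOp K a := by
  rw [← mulOp_mul, ← mulOp_mul, mul_comm]

lemma isDO_zero : ∀ n : ℕ, IsDO K n (0 : Module.End K R)
  | 0 => fun r => by simp
  | n + 1 => fun r => by simpa using isDO_zero n

lemma isDO_add : ∀ (n : ℕ) (u v : Module.End K R),
    IsDO K n u → IsDO K n v → IsDO K n (u + v)
  | 0, u, v, hu, hv => fun r => by rw [mul_add, add_mul, hu r, hv r]
  | n + 1, u, v, hu, hv => fun r => by
      have h : mulOp K r * (u + v) - (u + v) * mulOp K r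
          = (mulOp K r * u - u * mulOp K r) + (mulOp K r * v - v * mulOp K r) := by
        noncomm_ring
      rw [h]
      exact isDO_add n _ _ (hu r) (hv r)

lemma isDO_neg : ∀ (n : ℕ) (u : Module.End K R), IsDO K n u → IsDO K n (-u)
  | 0, u, hu => fun r => by rw [mul_neg (α := Module.End K R), hu r, neg_mul (α := Module.End K R)]
  | n + 1, u, hu => fun r => by
      have h : mulOp K r * (-u) - (-u) * mulOp K r
          = -(mulOp K r * u - u * mulOp K r) := by
          rw [mul_neg (α := Module.End K R), neg_mul (α := Module.End K R)]; abel
      rw [h]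
      exact isDO_neg n _ (hu r)

lemma isDO_mono : ∀ (n : ℕ) (u : Module.End K R), IsDO K n u → IsDO K (n + 1) u
  | 0, u, hu => fun r => by
      rw [sub_eq_zero_of_eq (hu r)]
      exact isDO_zero K 0
  | n + 1, u, hu => fun r => isDO_mono n _ (hu r)

lemma isDO_le {m n : ℕ} (h : m ≤ n) (u : Module.End K R) (hu : IsDO K m u) :
    IsDO K n u := by
  induction n with
  | zero => obtain rfl : m = 0 := Nat.le_zero.mp h; exact hu
  | succ n ih =>
    rcases Nat.eq_or_lt_of_le h with rfl | h'
    · exact hu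
    · exact isDO_mono K n u (ih (Nat.lt_succ_iff.mp h'))

lemma isDO_mul : ∀ (k m n : ℕ) (u v : Module.End K R), m + n ≤ k →
    IsDO K m u → IsDO K n v → IsDO K (m + n) (u * v) := by
  intro k
  induction k with
  | zero =>
    intro m n u v h hu hv
    obtain ⟨rfl, rfl⟩ : m = 0 ∧ n = 0 := by omega
    intro r
    rw [← mul_assoc, hu r, mul_assoc, hv r, ← mul_assoc]
  | succ k ih =>
    intro m n u v h hu hv
    match n with
    | 0 =>
      match m with
      | 0 =>
        intro r
        rw [← mul_assoc, hu r, mul_assoc, hv r, ← mul_assoc]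
      | m' + 1 =>
        intro r
        have key : mulOp K r * (u * v) - (u * v) * mulOp K r
            = (mulOp K r * u - u * mulOp K r) * v
              + u * (mulOp K r * v - v * mulOp K r) := by
            simp only [mul_sub, sub_mul, mul_assoc]; abel
        rw [key]
        have t1 : IsDO K (m' + 0) ((mulOp K r * u - u * mulOp K r) * v) :=
          ih m' 0 _ _ (by omega) (hu r) hv
        have t2 : IsDO K (m' + 0) (u * (mulOp K r * v - v * mulOp K r)) := by
          rw [sub_eq_zero_of_eq (hv r), mul_zero]
          exact isDO_zero K _
        exact isDO_add K _ _ _ t1 t2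
    | n' + 1 =>
      intro r
      have key : mulOp K r * (u * v) - (u * v) * mulOp K r
          = (mulOp K r * u - u * mulOp K r) * v
            + u * (mulOp K r * v - v * mulOp K r) := by
            simp only [mul_sub, sub_mul, mul_assoc]; abel
      rw [key]
      have t2 : IsDO K (m + n') (u * (mulOp K r * v - v * mulOp K r)) :=
        ih m n' _ _ (by omega) hu (hv r)
      have t1 : IsDO K (m + n') ((mulOp K r * u - u * mulOp K r) * v) := by
        match m with
        | 0 =>
          rw [sub_eq_zero_of_eq (hu r), zero_mul]
          exact isDO_zero K _
        | m' + 1 =>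
          have := ih m' (n' + 1) _ _ (by omega) (hu r) hv
          have hEq : m' + (n' + 1) = m' + 1 + n' := by omega
          rwa [hEq] at this
      exact isDO_add K _ _ _ t1 t2

lemma diffOp_zero : (0 : Module.End K R) ∈ DiffOp K R := ⟨0, isDO_zero K 0⟩

lemma diffOp_one : (1 : Module.End K R) ∈ DiffOp K R :=
  ⟨0, fun r => by rw [mul_one, one_mul]⟩

lemma diffOp_mulOp (a : R) : mulOp K a ∈ DiffOp K R :=
  ⟨0, fun r => mulOp_comm K r a⟩

lemma diffOp_add {u v : Module.End K R} (hu : u ∈ DiffOp K R) (hv : v ∈ DiffOp K R) :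
    u + v ∈ DiffOp K R := by
  obtain ⟨m, hm⟩ := hu
  obtain ⟨n, hn⟩ := hv
  exact ⟨max m n, isDO_add K _ _ _ (isDO_le K (le_max_left m n) u hm)
    (isDO_le K (le_max_right m n) v hn)⟩

lemma diffOp_neg {u : Module.End K R} (hu : u ∈ DiffOp K R) : -u ∈ DiffOp K R := by
  obtain ⟨m, hm⟩ := hu
  exact ⟨m, isDO_neg K m u hm⟩

lemma diffOp_mul {u v : Module.End K R} (hu : u ∈ DiffOp K R) (hv : v ∈ DiffOp K R) :
    u * v ∈ DiffOp K R := by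
  obtain ⟨m, hm⟩ := hu
  obtain ⟨n, hn⟩ := hv
  exact ⟨m + n, isDO_mul K (m + n) m n u v le_rfl hm hn⟩

/-- Multiplication by an idempotent is central in the ring of differential operators. -/
lemma isDO_central (ε : R) (hidem : ε * ε = ε) :
    ∀ (n : ℕ) (u : Module.End K R), IsDO K n u → mulOp K ε * u = u * mulOp K ε := by
  intro n
  induction n with
  | zero => intro u hu; exact hu ε
  | succ n ih =>
    intro u hu
    have hee : mulOp K ε * mulOp K ε = mulOp K ε := by rw [← mulOp_mul, hidem]
    set e' := mulOp K ε with he'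
    have key : e' * (e' * u - u * e') + (e' * u - u * e') * e'
        = e' * e' * u - u * (e' * e') := by
        simp only [mul_sub, sub_mul, mul_assoc]; abel
    rw [hee] at key
    have hcomm : e' * (e' * u - u * e') = (e' * u - u * e') * e' := ih _ (hu ε)
    rw [← hcomm] at key
    have h3 : e' * (e' * u - u * e')
        = e' * (e' * u - u * e') + e' * (e' * u - u * e') := by
      conv_lhs => rw [← key]
      rw [mul_add, ← mul_assoc, hee]
    have h4 : e' * (e' * u - u * e') = 0 := left_eq_add.mp h3
    rw [h4, add_zero] at key
    exact sub_eq_zero.mp key.symm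

end Aux

/-- Let `𝒜` be a semiprime commutative `K`-algebra with finitely many (at least two) minimal
primes, whose total quotient ring `Q(𝒜)` is a product of `s ≥ 2` fields, and suppose
`D(Q(𝒜))` is a localization of `D(𝒜)` containing `D(𝒜)` as an essential left
`D(𝒜)`-submodule.  Then `D(𝒜)` is not simple: `D(𝒜) ∩ D(K₁)` (cut out inside
`D(Q(𝒜)) ≅ ∏ D(Kᵢ)` by the idempotent `ε = (1,0,…,0)`) is a proper nonzero two-sided
ideal of `D(𝒜)`. -/
theorem stmt19 (K 𝒜 : Type*) [Field K] [CommRing 𝒜] [Algebra K 𝒜] [IsReduced 𝒜]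
    (hfin : (minimalPrimes 𝒜).Finite)
    (s : ℕ) (hs : 2 ≤ s)
    (Ki : Fin s → Type*) [∀ i, Field (Ki i)] [∀ i, Algebra K (Ki i)]
    (e : Localization (nonZeroDivisors 𝒜) ≃ₐ[K] ((i : Fin s) → Ki i))
    (φ : Module.End K 𝒜 → Module.End K (Localization (nonZeroDivisors 𝒜)))
    (hφ : IsDiffOpLocalization K (nonZeroDivisors 𝒜) φ)
    (hess : ∀ q ∈ DiffOp K (Localization (nonZeroDivisors 𝒜)), q ≠ 0 →
        ∃ d ∈ DiffOp K 𝒜, φ d * q ≠ 0 ∧ φ d * q ∈ φ '' DiffOp K 𝒜) :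
    let ε : Localization (nonZeroDivisors 𝒜) := e.symm (Pi.single ⟨0, by omega⟩ 1)
    let I : Set (Module.End K 𝒜) :=
      {d | d ∈ DiffOp K 𝒜 ∧ mulOp K ε * φ d = φ d ∧ φ d * mulOp K ε = φ d}
    IsIdealOfD K 𝒜 I ∧ I ≠ {0} ∧ I ≠ DiffOp K 𝒜 ∧
      ¬ (∀ J, IsIdealOfD K 𝒜 J → J = {0} ∨ J = DiffOp K 𝒜) := by
  intro ε I
  -- basic facts about ε
  have hidem : ε * ε = ε := by
    show e.symm _ * e.symm _ = e.symm _
    rw [← map_mul]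
    congr 1
    funext j
    rcases eq_or_ne j ⟨0, by omega⟩ with rfl | h
    · simp
    · simp [Pi.single_eq_of_ne h]
  have hε0 : ε ≠ 0 := by
    intro h
    have h2 : (Pi.single (⟨0, by omega⟩ : Fin s) (1 : Ki ⟨0, by omega⟩)) = 0 :=
      e.symm.injective (by rw [map_zero]; exact h)
    have h3 := congrFun h2 ⟨0, by omega⟩
    rw [Pi.single_eq_same] at h3
    exact one_ne_zero h3
  have hε1 : ε ≠ 1 := by
    intro h
    have h2 : (Pi.single (⟨0, by omega⟩ : Fin s) (1 : Ki ⟨0, by omega⟩))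
        = (1 : (i : Fin s) → Ki i) :=
      e.symm.injective (by rw [map_one]; exact h)
    have h3 := congrFun h2 ⟨1, by omega⟩
    rw [Pi.single_eq_of_ne (by simp [Fin.ext_iff])] at h3
    exact zero_ne_one h3
  have hee : mulOp K ε * mulOp K ε = mulOp K ε := by rw [← mulOp_mul, hidem]
  -- centrality of mulOp ε in D(Q)
  have hcent : ∀ q ∈ DiffOp K (Localization (nonZeroDivisors 𝒜)),
      mulOp K ε * q = q * mulOp K ε := by
    rintro q ⟨n, hn⟩
    exact isDO_central K ε hidem n q hn
  -- φ preserves 0 and neg on DiffOp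
  have hφ0 : φ 0 = 0 := by
    have h := hφ.map_add 0 (diffOp_zero K) 0 (diffOp_zero K)
    rw [add_zero] at h
    exact left_eq_add.mp h
  have hφneg : ∀ u ∈ DiffOp K 𝒜, φ (-u) = -φ u := by
    intro u hu
    have h := hφ.map_add u hu (-u) (diffOp_neg K hu)
    rw [add_neg_cancel, hφ0] at h
    exact eq_neg_of_add_eq_zero_right h.symm
  -- the ideal property
  have hIdeal : IsIdealOfD K 𝒜 I := by
    refine ⟨fun d hd => hd.1, ⟨diffOp_zero K, ?_, ?_⟩, ?_, ?_, ?_, ?_⟩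
    · rw [hφ0, mul_zero]
    · rw [hφ0, zero_mul]
    · intro u v hu hv
      exact ⟨diffOp_add K hu.1 hv.1,
        by rw [hφ.map_add u hu.1 v hv.1, mul_add, hu.2.1, hv.2.1],
        by rw [hφ.map_add u hu.1 v hv.1, add_mul, hu.2.2, hv.2.2]⟩
    · intro u hu
      exact ⟨diffOp_neg K hu.1,
        by rw [hφneg u hu.1, mul_neg (α := Module.End K (Localization (nonZeroDivisors 𝒜))), hu.2.1],
        by rw [hφneg u hu.1, neg_mul (φ u) (mulOp K ε), hu.2.2]⟩
    · intro d u hd hu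
      refine ⟨diffOp_mul K hd hu.1, ?_, ?_⟩
      · rw [hφ.map_mul d hd u hu.1, ← mul_assoc,
          hcent (φ d) (hφ.maps_diffOp d hd), mul_assoc, hu.2.1]
      · rw [hφ.map_mul d hd u hu.1, mul_assoc, hu.2.2]
    · intro d u hd hu
      refine ⟨diffOp_mul K hu.1 hd, ?_, ?_⟩
      · rw [hφ.map_mul u hu.1 d hd, ← mul_assoc, hu.2.1]
      · rw [hφ.map_mul u hu.1 d hd, mul_assoc,
          ← hcent (φ d) (hφ.maps_diffOp d hd), ← mul_assoc, hu.2.2]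
  -- a nonzero element of I
  have hqne : mulOp K ε ≠ (0 : Module.End K (Localization (nonZeroDivisors 𝒜))) := by
    intro h
    have h1 := DFunLike.congr_fun h 1
    rw [mulOp_apply, mul_one] at h1
    exact hε0 (by simpa using h1)
  obtain ⟨d, hd, hne, himg⟩ := hess (mulOp K ε) (diffOp_mulOp K ε) hqne
  obtain ⟨d', hd', heq⟩ := himg
  have hd'I : d' ∈ I := by
    refine ⟨hd', ?_, ?_⟩
    · rw [heq, ← mul_assoc, hcent (φ d) (hφ.maps_diffOp d hd), mul_assoc, hee]
    · rw [heq, mul_assoc, hee]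
  have hne' : d' ≠ 0 := by
    rintro rfl
    rw [hφ0] at heq
    exact hne heq.symm
  have hI0 : I ≠ {0} := by
    intro h
    rw [h] at hd'I
    exact hne' hd'I
  have hIne : I ≠ DiffOp K 𝒜 := by
    intro h
    have h1 : (1 : Module.End K 𝒜) ∈ I := h ▸ diffOp_one K
    have h2 := h1.2.1
    rw [hφ.map_one, mul_one] at h2
    have h3 := DFunLike.congr_fun h2 1
    rw [mulOp_apply, mul_one] at h3
    exact hε1 (by simpa using h3)
  exact ⟨hIdeal, hI0, hIne, fun hall => by
    rcases hall I hIdeal with h | h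
    exacts [hI0 h, hIne h]⟩
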